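/- For every s ≤ 0 and m ≤ 0, the tuple (R_{s,m}, D_{s,m}, C_{s,m}) lies on the rate-distortion-cost function, i.e., R_{s,m} = R(D_{s,m}, C_{s,m}). -/

import Mathlib

/-!
A minimiser `P*` of the Lagrangian `J = I - s E[d] - m E[Δ]` with `s, m ≤ 0` is also a minimiser
of the rate `I` among strategies whose distortion and cost do not exceed its own: for such a
strategy the penalty terms `-s E[d]` and `-m E[Δ]` can only be smaller than at `P*`, so
`J(P*) ≤ J(P)` forces `I(P*) ≤ I(P)`. Hence `R(D_{s,m}, C_{s,m}) = I(P*)`, while the unconstrained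
minimum equals `J(P*) = I(P*) - s D_{s,m} - m C_{s,m}`.
-/

open Finset

noncomputable section

/-- A probability mass function on a finite alphabet. -/
def IsPMF {α : Type} [Fintype α] (p : α → ℝ) : Prop :=
  (∀ a, 0 ≤ p a) ∧ ∑ a, p a = 1

/-- A conditional probability mass function. -/
def IsCondPMF {α β : Type} [Fintype α] [Fintype β] (p : α → β → ℝ) : Prop :=
  ∀ a, IsPMF (p a)

/-- A Shannon strategy: an estimate function `Y → Xh` together with an action in `A`. -/
abbrev Strat (Y Xh A : Type) : Type := (Y → Xh) × A

variable {X Y A Xh : Type} [Fintype X] [Fintype Y] [Fintype A] [Fintype Xh]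
  [DecidableEq X] [DecidableEq Y] [DecidableEq A] [DecidableEq Xh]


/-- Joint pmf `P_{X,Y,T}(x,y,t) = P_X(x) P_{T|X}(t|x) P_{Y|X,A}(y|x,a(t))`. -/
def pXYT (PX : X → ℝ) (PW : A → X → Y → ℝ) (PT : X → Strat Y Xh A → ℝ)
    (x : X) (y : Y) (t : Strat Y Xh A) : ℝ :=
  PX x * PT x t * PW t.2 x y

/-- Action marginal `P_A`. -/
def pA (PX : X → ℝ) (PT : X → Strat Y Xh A → ℝ) (a : A) : ℝ :=
  ∑ x, ∑ t, if t.2 = a then PX x * PT x t else 0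

/-- Marginal `P_{X,A}`. -/
def pXA (PX : X → ℝ) (PT : X → Strat Y Xh A → ℝ) (x : X) (a : A) : ℝ :=
  ∑ t, if t.2 = a then PX x * PT x t else 0

/-- Marginal `P_{Y,A}`. -/
def pYA (PX : X → ℝ) (PW : A → X → Y → ℝ) (PT : X → Strat Y Xh A → ℝ)
    (y : Y) (a : A) : ℝ :=
  ∑ x, ∑ t, if t.2 = a then pXYT PX PW PT x y t else 0

/-- Marginal `P_{X,Y,A}`. -/
def pXYA (PX : X → ℝ) (PW : A → X → Y → ℝ) (PT : X → Strat Y Xh A → ℝ)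
    (x : X) (y : Y) (a : A) : ℝ :=
  ∑ t, if t.2 = a then pXYT PX PW PT x y t else 0

/-- Marginal `P_{Y,T}`. -/
def pYT (PX : X → ℝ) (PW : A → X → Y → ℝ) (PT : X → Strat Y Xh A → ℝ)
    (y : Y) (t : Strat Y Xh A) : ℝ :=
  ∑ x, pXYT PX PW PT x y t

/-- Mutual information `I(X; a(T))` (base-2 logarithms). -/
def IXA (PX : X → ℝ) (PT : X → Strat Y Xh A → ℝ) : ℝ :=
  ∑ x, ∑ a, pXA PX PT x a * Real.logb 2 (pXA PX PT x a / (PX x * pA PX PT a))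

/-- Conditional mutual information `I(X; T | Y, a(T))` (base-2 logarithms). -/
def IXTcondYA (PX : X → ℝ) (PW : A → X → Y → ℝ) (PT : X → Strat Y Xh A → ℝ) : ℝ :=
  ∑ x, ∑ y, ∑ t, pXYT PX PW PT x y t *
    Real.logb 2 (pXYT PX PW PT x y t * pYA PX PW PT y t.2 /
      (pXYA PX PW PT x y t.2 * pYT PX PW PT y t))

/-- Average distortion `E[d(X, T(Y))]`. -/
def expDist (PX : X → ℝ) (PW : A → X → Y → ℝ) (dist : X → Xh → ℝ)
    (PT : X → Strat Y Xh A → ℝ) : ℝ :=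
  ∑ x, ∑ y, ∑ t, pXYT PX PW PT x y t * dist x (t.1 y)

/-- Average action cost `E[Δ(a(T))]`. -/
def expCost (PX : X → ℝ) (cost : A → ℝ) (PT : X → Strat Y Xh A → ℝ) : ℝ :=
  ∑ x, ∑ t, PX x * PT x t * cost t.2

/-- The rate-distortion-cost function in the Shannon-strategy formulation. -/
def RDC (PX : X → ℝ) (PW : A → X → Y → ℝ) (dist : X → Xh → ℝ) (cost : A → ℝ)
    (D C : ℝ) : ℝ :=
  sInf { r : ℝ | ∃ PT : X → Strat Y Xh A → ℝ, IsCondPMF PT ∧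
    expDist PX PW dist PT ≤ D ∧ expCost PX cost PT ≤ C ∧
    r = IXA PX PT + IXTcondYA PX PW PT }
/-- The Lagrangian functional
`I(X;a(T)) + I(X;T|Y,a(T)) − s E[d(X,T(Y))] − m E[Δ(a(T))]`. -/
def Jfun (PX : X → ℝ) (PW : A → X → Y → ℝ) (dist : X → Xh → ℝ) (cost : A → ℝ)
    (s m : ℝ) (PT : X → Strat Y Xh A → ℝ) : ℝ :=
  IXA PX PT + IXTcondYA PX PW PT - s * expDist PX PW dist PT - m * expCost PX cost PT

/-- The unconstrained minimum `min_{P_{T|X}} { I(X;a(T)) + I(X;T|Y,a(T)) − s E[d] − m E[Δ] }`. -/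
def Jmin (PX : X → ℝ) (PW : A → X → Y → ℝ) (dist : X → Xh → ℝ) (cost : A → ℝ)
    (s m : ℝ) : ℝ :=
  sInf { r : ℝ | ∃ PT : X → Strat Y Xh A → ℝ, IsCondPMF PT ∧
    r = Jfun PX PW dist cost s m PT }

theorem le_of_lagrangian_le {s m f₀ f g₀ g h₀ h : ℝ} (hs : s ≤ 0) (hm : m ≤ 0)
    (hg : g ≤ g₀) (hh : h ≤ h₀) (hL : f₀ - s * g₀ - m * h₀ ≤ f - s * g - m * h) : f₀ ≤ f := by
  nlinarith

section Minimiser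

variable {X Y A Xh : Type} [Fintype X] [Fintype Y] [Fintype A] [Fintype Xh]
  [DecidableEq Y] [DecidableEq A]
  {PX : X → ℝ} {PW : A → X → Y → ℝ} {dist : X → Xh → ℝ} {cost : A → ℝ} {s m : ℝ}
  {Pstar : X → Strat Y Xh A → ℝ}

theorem Jmin_eq_Jfun_of_forall_le (hPstar : IsCondPMF Pstar)
    (hmin : ∀ PT : X → Strat Y Xh A → ℝ, IsCondPMF PT →
      Jfun PX PW dist cost s m Pstar ≤ Jfun PX PW dist cost s m PT) :
    Jmin PX PW dist cost s m = Jfun PX PW dist cost s m Pstar :=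
  IsLeast.csInf_eq ⟨⟨Pstar, hPstar, rfl⟩, by rintro _ ⟨PT, hPT, rfl⟩; exact hmin PT hPT⟩

theorem RDC_eq_of_forall_Jfun_le (hs : s ≤ 0) (hm : m ≤ 0) (hPstar : IsCondPMF Pstar)
    (hmin : ∀ PT : X → Strat Y Xh A → ℝ, IsCondPMF PT →
      Jfun PX PW dist cost s m Pstar ≤ Jfun PX PW dist cost s m PT) :
    RDC PX PW dist cost (expDist PX PW dist Pstar) (expCost PX cost Pstar) =
      IXA PX Pstar + IXTcondYA PX PW Pstar :=
  IsLeast.csInf_eq ⟨⟨Pstar, hPstar, le_rfl, le_rfl, rfl⟩, by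
    rintro _ ⟨PT, hPT, hD, hC, rfl⟩
    exact le_of_lagrangian_le hs hm hD hC (hmin PT hPT)⟩

end Minimiser

theorem parametric_point_on_RDC_general
    {X Y A Xh : Type} [Fintype X] [Fintype Y] [Fintype A] [Fintype Xh]
    [DecidableEq Y] [DecidableEq A]
    (PX : X → ℝ) (PW : A → X → Y → ℝ) (dist : X → Xh → ℝ) (cost : A → ℝ)
    (s m : ℝ) (hs : s ≤ 0) (hm : m ≤ 0)
    (Pstar : X → Strat Y Xh A → ℝ) (hPstar : IsCondPMF Pstar)
    (hmin : ∀ PT : X → Strat Y Xh A → ℝ, IsCondPMF PT →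
      Jfun PX PW dist cost s m Pstar ≤ Jfun PX PW dist cost s m PT) :
    s * expDist PX PW dist Pstar + m * expCost PX cost Pstar +
        Jmin PX PW dist cost s m =
      RDC PX PW dist cost (expDist PX PW dist Pstar) (expCost PX cost Pstar) := by
  rw [Jmin_eq_Jfun_of_forall_le hPstar hmin, RDC_eq_of_forall_Jfun_le hs hm hPstar hmin, Jfun]
  ring

/-- For every `s ≤ 0` and `m ≤ 0`, the parametrically defined tuple
`(R_{s,m}, D_{s,m}, C_{s,m})` lies on the rate-distortion-cost function:
`R_{s,m} = R(D_{s,m}, C_{s,m})`. -/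
theorem parametric_point_on_RDC
    {X Y A Xh : Type} [Fintype X] [Fintype Y] [Fintype A] [Fintype Xh]
    [DecidableEq X] [DecidableEq Y] [DecidableEq A] [DecidableEq Xh]
    [Nonempty X] [Nonempty Y] [Nonempty A] [Nonempty Xh]
    (PX : X → ℝ) (PW : A → X → Y → ℝ) (dist : X → Xh → ℝ) (cost : A → ℝ)
    (hPX : IsPMF PX) (hPXpos : ∀ x, 0 < PX x)
    (hPW : ∀ a x, IsPMF (PW a x))
    (hdist : ∀ x xh, 0 ≤ dist x xh) (hdist0 : ∀ x, ∃ xh, dist x xh = 0)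
    (hcost : ∀ a, 0 ≤ cost a) (hcost0 : ∃ a, cost a = 0)
    (s m : ℝ) (hs : s ≤ 0) (hm : m ≤ 0)
    (Pstar : X → Strat Y Xh A → ℝ) (hPstar : IsCondPMF Pstar)
    (hmin : ∀ PT : X → Strat Y Xh A → ℝ, IsCondPMF PT →
      Jfun PX PW dist cost s m Pstar ≤ Jfun PX PW dist cost s m PT) :
    s * expDist PX PW dist Pstar + m * expCost PX cost Pstar +
        Jmin PX PW dist cost s m =
      RDC PX PW dist cost (expDist PX PW dist Pstar) (expCost PX cost Pstar) :=
  parametric_point_on_RDC_general PX PW dist cost s m hs hm Pstar hPstar hmin
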